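/- Let $f$ be $C^1$ with polynomially bounded gradient on $\mathbb{R}^d$ and $\int f\varphi = 0$ for the OU invariant measure $\varphi$. Then there exist $C > 0$ such that $|T_t f(0)| \le C e^{-2\mu t}$ for all $t \ge 1$. -/

import Mathlib

/-!
At the origin the Ornstein–Uhlenbeck semigroup is `T_t f (0) = ∫ f (s y) φ(y) dy` with
`s = √(1 - e^{-2μt})`. Subtracting `∫ f φ = 0` and applying the mean value theorem on the ball of
radius `‖y‖` gives `|f (s y) - f y| ≤ C (1 + ‖y‖ⁿ) (1 - s) ‖y‖`, which is integrable against the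
Gaussian. Since `1 - √(1 - e) ≤ e`, the decay rate is `e^{-2μt}` rather than the spectral-gap
rate `e^{-μt}`.
-/

open MeasureTheory

section Gaussian

variable {V : Type*} [NormedAddCommGroup V] [InnerProductSpace ℝ V] [FiniteDimensional ℝ V]
  [MeasurableSpace V] [BorelSpace V]

theorem integrable_exp_neg_mul_sq_norm {b : ℝ} (hb : 0 < b) :
    Integrable (fun v : V => Real.exp (-b * ‖v‖ ^ 2)) := by
  have h := (GaussianFourier.integrable_cexp_neg_mul_sq_norm_add
      (b := (b : ℂ)) (by simpa using hb) 0 (0 : V)).norm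
  convert h using 2 with v
  simp [Complex.norm_exp, ← Complex.ofReal_pow]

/-- Half of the Gaussian decay absorbs the weight `r ^ k`: `k r ≤ k² / (2c) + c r² / 2`. -/
theorem pow_mul_exp_neg_mul_sq_le {c r : ℝ} (hc : 0 < c) (hr : 0 ≤ r) (k : ℕ) :
    r ^ k * Real.exp (-c * r ^ 2) ≤
      Real.exp (k ^ 2 / (2 * c)) * Real.exp (-(c / 2) * r ^ 2) := by
  have h_pow : r ^ k ≤ Real.exp (k * r) :=
    calc r ^ k ≤ Real.exp r ^ k := pow_le_pow_left₀ hr (by linarith [Real.add_one_le_exp r]) k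
      _ = Real.exp (k * r) := (Real.exp_nat_mul r k).symm
  have h_amgm : (k : ℝ) * r ≤ k ^ 2 / (2 * c) + c / 2 * r ^ 2 := by
    rw [div_add' _ _ _ (by positivity), le_div_iff₀ (by positivity)]
    nlinarith [sq_nonneg ((k : ℝ) - c * r)]
  calc r ^ k * Real.exp (-c * r ^ 2) ≤ Real.exp (k * r) * Real.exp (-c * r ^ 2) := by gcongr
    _ ≤ Real.exp (k ^ 2 / (2 * c)) * Real.exp (-(c / 2) * r ^ 2) := by
      rw [← Real.exp_add, ← Real.exp_add, Real.exp_le_exp]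
      linarith

theorem integrable_pow_norm_mul_exp_neg_mul_sq_norm {c : ℝ} (hc : 0 < c) (k : ℕ) :
    Integrable (fun v : V => ‖v‖ ^ k * Real.exp (-c * ‖v‖ ^ 2)) := by
  refine ((integrable_exp_neg_mul_sq_norm (half_pos hc)).const_mul
    (Real.exp (k ^ 2 / (2 * c)))).mono' (by fun_prop) (.of_forall fun v => ?_)
  rw [Real.norm_of_nonneg (by positivity)]
  exact pow_mul_exp_neg_mul_sq_le hc (norm_nonneg v) k

end Gaussian

theorem nonneg_of_norm_le_mul_one_add_pow {E F : Type*} [SeminormedAddCommGroup E]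
    [SeminormedAddCommGroup F] {g : E → F} {C : ℝ} {n : ℕ}
    (hC : ∀ x, ‖g x‖ ≤ C * (1 + ‖x‖ ^ n)) : 0 ≤ C :=
  nonneg_of_mul_nonneg_left ((norm_nonneg _).trans (hC 0)) (by positivity)

section PolynomialGradient

variable {E : Type*} [NormedAddCommGroup E] [NormedSpace ℝ E] {C : ℝ} {n : ℕ}

theorem norm_comp_smul_sub_le_of_norm_fderiv_le {F : Type*} [NormedAddCommGroup F] [NormedSpace ℝ F]
    {f : E → F} (hf : Differentiable ℝ f) (hC : ∀ x, ‖fderiv ℝ f x‖ ≤ C * (1 + ‖x‖ ^ n))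
    {s : ℝ} (hs0 : 0 ≤ s) (hs1 : s ≤ 1) (y : E) :
    ‖f (s • y) - f y‖ ≤ C * (1 + ‖y‖ ^ n) * ((1 - s) * ‖y‖) := by
  have hC0 := nonneg_of_norm_le_mul_one_add_pow hC
  have h_ball : ∀ {x : E}, ‖x‖ ≤ ‖y‖ → x ∈ Metric.closedBall (0 : E) ‖y‖ := by simp
  have hsy : ‖s • y‖ ≤ ‖y‖ := by
    rw [norm_smul, Real.norm_of_nonneg hs0]
    exact mul_le_of_le_one_left (norm_nonneg y) hs1
  have hC_ball : ∀ x ∈ Metric.closedBall (0 : E) ‖y‖, ‖fderiv ℝ f x‖ ≤ C * (1 + ‖y‖ ^ n) := by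
    intro x hx
    rw [mem_closedBall_zero_iff] at hx
    exact (hC x).trans (by gcongr)
  calc ‖f (s • y) - f y‖ ≤ C * (1 + ‖y‖ ^ n) * ‖s • y - y‖ :=
        (convex_closedBall 0 ‖y‖).norm_image_sub_le_of_norm_fderiv_le (fun x _ => hf x) hC_ball
          (h_ball le_rfl) (h_ball hsy)
    _ = C * (1 + ‖y‖ ^ n) * ((1 - s) * ‖y‖) := by
      rw [show s • y - y = (s - 1) • y by rw [sub_smul, one_smul], norm_smul,
        Real.norm_of_nonpos (by linarith), neg_sub]

theorem abs_comp_smul_sub_mul_le {f : E → ℝ} (hf : Differentiable ℝ f)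
    (hC : ∀ x, ‖fderiv ℝ f x‖ ≤ C * (1 + ‖x‖ ^ n)) {s : ℝ} (hs0 : 0 ≤ s) (hs1 : s ≤ 1)
    (w : E → ℝ) (y : E) :
    |(f (s • y) - f y) * w y| ≤ (1 - s) * (C * ((‖y‖ + ‖y‖ ^ (n + 1)) * |w y|)) := by
  rw [abs_mul, ← Real.norm_eq_abs (_ - _)]
  calc ‖f (s • y) - f y‖ * |w y| ≤ C * (1 + ‖y‖ ^ n) * ((1 - s) * ‖y‖) * |w y| := by
        gcongr
        exact norm_comp_smul_sub_le_of_norm_fderiv_le hf hC hs0 hs1 y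
    _ = (1 - s) * (C * ((‖y‖ + ‖y‖ ^ (n + 1)) * |w y|)) := by ring

end PolynomialGradient

theorem integrable_norm_add_norm_pow_mul_abs {E : Type*} [NormedAddCommGroup E]
    [MeasurableSpace E] {ν : Measure E} {w : E → ℝ}
    (hw : ∀ k : ℕ, Integrable (fun y => ‖y‖ ^ k * w y) ν) (n : ℕ) :
    Integrable (fun y => (‖y‖ + ‖y‖ ^ n) * |w y|) ν := by
  refine ((hw 1).norm.add (hw n).norm).congr (.of_forall fun y => ?_)
  simp only [Pi.add_apply, norm_mul, norm_pow, Real.norm_eq_abs, abs_norm, pow_one]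
  ring

section Weighted

variable {E : Type*} [NormedAddCommGroup E] [NormedSpace ℝ E] [MeasurableSpace E]
  [OpensMeasurableSpace E] {ν : Measure E} {w f : E → ℝ} {C : ℝ} {n : ℕ}

theorem integrable_comp_smul_sub_mul_of_norm_fderiv_le (hf : Differentiable ℝ f)
    (hC : ∀ x, ‖fderiv ℝ f x‖ ≤ C * (1 + ‖x‖ ^ n))
    (hw : ∀ k : ℕ, Integrable (fun y => ‖y‖ ^ k * w y) ν) {s : ℝ} (hs0 : 0 ≤ s) (hs1 : s ≤ 1) :
    Integrable (fun y => (f (s • y) - f y) * w y) ν := by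
  have hw_meas : AEStronglyMeasurable w ν := by simpa using (hw 0).aestronglyMeasurable
  refine (((integrable_norm_add_norm_pow_mul_abs hw (n + 1)).const_mul C).const_mul (1 - s)).mono'
    ?_ (.of_forall fun y => abs_comp_smul_sub_mul_le hf hC hs0 hs1 w y)
  exact ((hf.continuous.comp (continuous_const_smul s)).sub hf.continuous).aestronglyMeasurable.mul
    hw_meas

theorem integrable_mul_of_norm_fderiv_le (hf : Differentiable ℝ f)
    (hC : ∀ x, ‖fderiv ℝ f x‖ ≤ C * (1 + ‖x‖ ^ n))
    (hw : ∀ k : ℕ, Integrable (fun y => ‖y‖ ^ k * w y) ν) :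
    Integrable (fun y => f y * w y) ν := by
  have hw0 : Integrable w ν := by simpa using hw 0
  refine ((hw0.const_mul (f 0)).sub
    (integrable_comp_smul_sub_mul_of_norm_fderiv_le hf hC hw le_rfl zero_le_one)).congr
    (.of_forall fun y => ?_)
  simp only [Pi.sub_apply, zero_smul]
  ring

theorem integrable_comp_smul_mul_of_norm_fderiv_le (hf : Differentiable ℝ f)
    (hC : ∀ x, ‖fderiv ℝ f x‖ ≤ C * (1 + ‖x‖ ^ n))
    (hw : ∀ k : ℕ, Integrable (fun y => ‖y‖ ^ k * w y) ν) {s : ℝ} (hs0 : 0 ≤ s) (hs1 : s ≤ 1) :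
    Integrable (fun y => f (s • y) * w y) ν :=
  ((integrable_comp_smul_sub_mul_of_norm_fderiv_le hf hC hw hs0 hs1).add
    (integrable_mul_of_norm_fderiv_le hf hC hw)).congr
    (.of_forall fun y => by simp only [Pi.add_apply]; ring)

theorem exists_abs_integral_comp_smul_sub_le (hf : Differentiable ℝ f)
    (hC : ∀ x, ‖fderiv ℝ f x‖ ≤ C * (1 + ‖x‖ ^ n))
    (hw : ∀ k : ℕ, Integrable (fun y => ‖y‖ ^ k * w y) ν) :
    ∃ M, 0 ≤ M ∧ ∀ s, 0 ≤ s → s ≤ 1 →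
      |∫ y, f (s • y) * w y ∂ν - ∫ y, f y * w y ∂ν| ≤ (1 - s) * M := by
  have hC0 := nonneg_of_norm_le_mul_one_add_pow hC
  refine ⟨∫ y, C * ((‖y‖ + ‖y‖ ^ (n + 1)) * |w y|) ∂ν,
    integral_nonneg fun y => by positivity, fun s hs0 hs1 => ?_⟩
  rw [← integral_const_mul,
    ← integral_sub (integrable_comp_smul_mul_of_norm_fderiv_le hf hC hw hs0 hs1)
      (integrable_mul_of_norm_fderiv_le hf hC hw), ← Real.norm_eq_abs]
  refine norm_integral_le_of_norm_le
    (((integrable_norm_add_norm_pow_mul_abs hw (n + 1)).const_mul C).const_mul (1 - s))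
    (.of_forall fun y => ?_)
  rw [Real.norm_eq_abs, ← sub_mul]
  exact abs_comp_smul_sub_mul_le hf hC hs0 hs1 w y

end Weighted

theorem one_sub_sqrt_one_sub_le {e : ℝ} (he0 : 0 ≤ e) (he1 : e ≤ 1) : 1 - √(1 - e) ≤ e := by
  have hs0 := Real.sqrt_nonneg (1 - e)
  have hs1 : √(1 - e) ≤ 1 := Real.sqrt_le_one.2 (by linarith)
  have hsq := Real.sq_sqrt (show 0 ≤ 1 - e by linarith)
  nlinarith

theorem OU_semigroup_decay_at_origin_general
    {d : ℕ} (μ σ : ℝ) (hμ : 0 < μ) (hσ : 0 < σ)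
    (φ : EuclideanSpace ℝ (Fin d) → ℝ)
    (hφ : ∀ y, φ y = (μ / (Real.pi * σ ^ 2)) ^ ((d : ℝ) / 2) *
      Real.exp (-(μ / σ ^ 2) * ‖y‖ ^ 2))
    (T : ℝ → (EuclideanSpace ℝ (Fin d) → ℝ) → EuclideanSpace ℝ (Fin d) → ℝ)
    (hT : ∀ t f x, T t f x =
      ∫ y, f (Real.exp (-μ * t) • x + Real.sqrt (1 - Real.exp (-2 * μ * t)) • y) * φ y)
    (f : EuclideanSpace ℝ (Fin d) → ℝ)
    (hf1 : ContDiff ℝ 1 f)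
    (hgrad : ∃ (C₁ : ℝ) (n₁ : ℕ), ∀ x, ‖fderiv ℝ f x‖ ≤ C₁ * (1 + ‖x‖ ^ n₁))
    (hcentered : (∫ y, f y * φ y) = 0) :
    ∃ C > (0:ℝ), ∀ t ≥ (1:ℝ), |T t f 0| ≤ C * Real.exp (-2 * μ * t) := by
  obtain ⟨C₁, n₁, hC₁⟩ := hgrad
  have hφ_moments : ∀ k : ℕ, Integrable (fun y => ‖y‖ ^ k * φ y) := fun k => by
    simpa only [hφ, mul_left_comm] using
      (integrable_pow_norm_mul_exp_neg_mul_sq_norm (V := EuclideanSpace ℝ (Fin d))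
        (div_pos hμ (pow_pos hσ 2)) k).const_mul ((μ / (Real.pi * σ ^ 2)) ^ ((d : ℝ) / 2))
  obtain ⟨M, hM0, hM⟩ :=
    exists_abs_integral_comp_smul_sub_le (hf1.differentiable one_ne_zero) hC₁ hφ_moments
  refine ⟨M + 1, by positivity, fun t ht => ?_⟩
  set e := Real.exp (-2 * μ * t)
  have he0 : 0 ≤ e := Real.exp_nonneg _
  have he1 : e ≤ 1 := Real.exp_le_one_iff.2 (by nlinarith)
  have hT0 : T t f 0 = ∫ y, f (√(1 - e) • y) * φ y := by simp [hT, e]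
  calc |T t f 0| = |(∫ y, f (√(1 - e) • y) * φ y) - ∫ y, f y * φ y| := by
        simp only [hT0, hcentered, sub_zero]
    _ ≤ (1 - √(1 - e)) * M := hM √(1 - e) (Real.sqrt_nonneg _) (Real.sqrt_le_one.2 (by linarith))
    _ ≤ e * M := by gcongr; exact one_sub_sqrt_one_sub_le he0 he1
    _ ≤ (M + 1) * e := by nlinarith

/-- Improved decay of the OU semigroup at the origin: for a centered `C¹` function `f`
with polynomially bounded gradient, `|T_t f (0)| ≤ C e^{-2 μ t}` for `t ≥ 1`. -/
theorem OU_semigroup_decay_at_origin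
    {d : ℕ} (μ σ : ℝ) (hμ : 0 < μ) (hσ : 0 < σ)
    (φ : EuclideanSpace ℝ (Fin d) → ℝ)
    (hφ : ∀ y, φ y = (μ / (Real.pi * σ ^ 2)) ^ ((d : ℝ) / 2) *
      Real.exp (-(μ / σ ^ 2) * ‖y‖ ^ 2))
    (T : ℝ → (EuclideanSpace ℝ (Fin d) → ℝ) → EuclideanSpace ℝ (Fin d) → ℝ)
    (hT : ∀ t f x, T t f x =
      ∫ y, f (Real.exp (-μ * t) • x + Real.sqrt (1 - Real.exp (-2 * μ * t)) • y) * φ y)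
    (f : EuclideanSpace ℝ (Fin d) → ℝ)
    (hf1 : ContDiff ℝ 1 f)
    (hgrow : ∃ (C₀ : ℝ) (n : ℕ), ∀ x, |f x| ≤ C₀ * (1 + ‖x‖ ^ n))
    (hgrad : ∃ (C₁ : ℝ) (n₁ : ℕ), ∀ x, ‖fderiv ℝ f x‖ ≤ C₁ * (1 + ‖x‖ ^ n₁))
    (hcentered : (∫ y, f y * φ y) = 0) :
    ∃ C > (0:ℝ), ∀ t ≥ (1:ℝ), |T t f 0| ≤ C * Real.exp (-2 * μ * t) :=
  OU_semigroup_decay_at_origin_general μ σ hμ hσ φ hφ T hT f hf1 hgrad hcentered
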